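/- Let k ∈ ℝ, k ≠ 0, b ∈ ℂ, A = ik (scalar), B(x,t) = b·(cos(kx - k²t), sin(kx - k²t)) viewed as a map ℂ² → ℂ (row vector), C = B* (its conjugate transpose), and X(x,t) = 1 + |b|²(x - 2kt). With σ₁ = [[0,i],[-i,0]], σ₂ = I, γ = 0, these satisfy: ∂B/∂x = -(A·B·σ₂ + B·γ)·σ₁⁻¹, ∂X/∂x = B·σ₂·C, ∂B/∂t = iA·∂B/∂x, and the Lyapunov equation A·X + X·A* + B·σ₁·B* = 0. -/

import Mathlib

/-!
With θ = kx − k²t we have B = b (cos θ, sin θ), and since σ₁² = 1 the prescribed derivative is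
Bx = −(AB)σ₁ = kb (−sin θ, cos θ); both flows are then the chain rule through θ, with ∂θ/∂x = k and
∂θ/∂t = −k². As A = ik is a purely imaginary scalar, AX + XA* = 0 for every X, while
Bσ₁B* = i|b|²(sin θ cos θ − cos θ sin θ) = 0 and BB* = |b|²(cos²θ + sin²θ) = ∂X/∂x.
-/

open Matrix

noncomputable section

def sigma1 : Matrix (Fin 2) (Fin 2) ℂ := !![0, Complex.I; -Complex.I, 0]
def sigma2 : Matrix (Fin 2) (Fin 2) ℂ := 1
def gamma0 : Matrix (Fin 2) (Fin 2) ℂ := 0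

/-- The 1×2 operator B(x,t) of the rational soliton. -/
def Bm (k : ℝ) (b : ℂ) (x t : ℝ) : Matrix (Fin 1) (Fin 2) ℂ :=
  !![b * (Real.cos (k * x - k ^ 2 * t) : ℂ), b * (Real.sin (k * x - k ^ 2 * t) : ℂ)]

def Am (k : ℝ) : Matrix (Fin 1) (Fin 1) ℂ := !![Complex.I * k]

def Xm (k : ℝ) (b : ℂ) (x t : ℝ) : Matrix (Fin 1) (Fin 1) ℂ :=
  !![1 + ((‖b‖ ^ 2 * (x - 2 * k * t) : ℝ) : ℂ)]

/-- The x-derivative of B prescribed by the prevessel equation. -/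
def Bx (k : ℝ) (b : ℂ) (x t : ℝ) : Matrix (Fin 1) (Fin 2) ℂ :=
  -(Am k * Bm k b x t * sigma2 + Bm k b x t * gamma0) * sigma1⁻¹

lemma sigma1_inv : sigma1⁻¹ = sigma1 := by
  refine Matrix.inv_eq_right_inv ?_
  ext i j
  fin_cases i <;> fin_cases j <;> simp [sigma1, Matrix.mul_apply, Fin.sum_univ_two]

lemma Bx_eq_neg_Am_mul_Bm_mul_sigma1 (k : ℝ) (b : ℂ) (x t : ℝ) :
    Bx k b x t = -(Am k * Bm k b x t) * sigma1 := by
  simp [Bx, sigma1_inv, sigma2, gamma0]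

lemma Bx_eq (k : ℝ) (b : ℂ) (x t : ℝ) :
    Bx k b x t = !![-(k * b * (Real.sin (k * x - k ^ 2 * t) : ℂ)),
      k * b * (Real.cos (k * x - k ^ 2 * t) : ℂ)] := by
  rw [Bx_eq_neg_Am_mul_Bm_mul_sigma1]
  ext i j
  fin_cases i; fin_cases j <;> simp [Am, Bm, sigma1] <;> ring_nf <;> simp

lemma I_smul_Am_mul_Bx (k : ℝ) (b : ℂ) (x t : ℝ) :
    Complex.I • (Am k * Bx k b x t) = !![k ^ 2 * b * (Real.sin (k * x - k ^ 2 * t) : ℂ),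
      -(k ^ 2 * b * (Real.cos (k * x - k ^ 2 * t) : ℂ))] := by
  rw [Bx_eq]
  ext i j
  fin_cases i; fin_cases j <;> simp [Am] <;> ring_nf <;> simp

lemma Am_mul_add_mul_conjTranspose_Am (k : ℝ) (X : Matrix (Fin 1) (Fin 1) ℂ) :
    Am k * X + X * (Am k)ᴴ = 0 := by
  ext i j
  fin_cases i; fin_cases j
  simp [Am, Matrix.mul_apply, Matrix.vecMul, Matrix.vecHead]
  ring

lemma real_row_mul_sigma1_mul_conjTranspose (b : ℂ) (c s : ℝ) :
    !![b * c, b * s] * sigma1 * (!![b * c, b * s])ᴴ = 0 := by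
  ext i j
  fin_cases i; fin_cases j
  simp [sigma1, Matrix.mul_apply, Fin.sum_univ_two]
  ring

lemma real_row_mul_conjTranspose (b : ℂ) (c s : ℝ) :
    !![b * c, b * s] * (!![b * c, b * s])ᴴ = !![((‖b‖ ^ 2 * (c ^ 2 + s ^ 2) : ℝ) : ℂ)] := by
  ext i j
  fin_cases i; fin_cases j
  simp [Matrix.mul_apply, Fin.sum_univ_two]
  linear_combination ((c : ℂ) ^ 2 + (s : ℂ) ^ 2) * Complex.mul_conj' b

lemma Bm_mul_sigma2_mul_conjTranspose (k : ℝ) (b : ℂ) (x t : ℝ) :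
    Bm k b x t * sigma2 * (Bm k b x t)ᴴ = !![((‖b‖ ^ 2 : ℝ) : ℂ)] := by
  rw [sigma2, Matrix.mul_one, Bm, real_row_mul_conjTranspose, Real.cos_sq_add_sin_sq, mul_one]

lemma HasDerivAt.const_mul_ofReal_cos {θ : ℝ → ℝ} {θ' x : ℝ} (b : ℂ) (h : HasDerivAt θ θ' x) :
    HasDerivAt (fun y => b * (Real.cos (θ y) : ℂ)) (-(θ' * b * (Real.sin (θ x) : ℂ))) x :=
  (h.cos.ofReal_comp.const_mul b).congr_deriv (by push_cast; ring)

lemma HasDerivAt.const_mul_ofReal_sin {θ : ℝ → ℝ} {θ' x : ℝ} (b : ℂ) (h : HasDerivAt θ θ' x) :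
    HasDerivAt (fun y => b * (Real.sin (θ y) : ℂ)) (θ' * b * (Real.cos (θ x) : ℂ)) x :=
  (h.sin.ofReal_comp.const_mul b).congr_deriv (by push_cast; ring)

lemma hasDerivAt_Bm_x (k : ℝ) (b : ℂ) (x t : ℝ) (i : Fin 1) (j : Fin 2) :
    HasDerivAt (fun y => Bm k b y t i j) (Bx k b x t i j) x := by
  have hθ : HasDerivAt (fun y => k * y - k ^ 2 * t) k x := by
    simpa using ((hasDerivAt_id x).const_mul k).sub_const (k ^ 2 * t)
  rw [Bx_eq]
  fin_cases i; fin_cases j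
  · exact hθ.const_mul_ofReal_cos b
  · exact hθ.const_mul_ofReal_sin b

lemma hasDerivAt_Bm_t (k : ℝ) (b : ℂ) (x t : ℝ) (i : Fin 1) (j : Fin 2) :
    HasDerivAt (fun s => Bm k b x s i j) ((Complex.I • (Am k * Bx k b x t)) i j) t := by
  have hθ : HasDerivAt (fun s => k * x - k ^ 2 * s) (-k ^ 2) t := by
    simpa using ((hasDerivAt_id t).const_mul (k ^ 2)).const_sub (k * x)
  rw [I_smul_Am_mul_Bx]
  fin_cases i; fin_cases j
  · exact (hθ.const_mul_ofReal_cos b).congr_deriv (by simp)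
  · exact (hθ.const_mul_ofReal_sin b).congr_deriv (by simp)

lemma hasDerivAt_Xm_x (k : ℝ) (b : ℂ) (x t : ℝ) (i j : Fin 1) :
    HasDerivAt (fun y => Xm k b y t i j) ((Bm k b x t * sigma2 * (Bm k b x t)ᴴ) i j) x := by
  rw [Bm_mul_sigma2_mul_conjTranspose]
  fin_cases i; fin_cases j
  have h : HasDerivAt (fun y => ‖b‖ ^ 2 * (y - 2 * k * t)) (‖b‖ ^ 2) x := by
    simpa using ((hasDerivAt_id x).sub_const (2 * k * t)).const_mul (‖b‖ ^ 2)
  simpa [Xm] using h.ofReal_comp.const_add 1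

theorem stmt_16_general (k : ℝ) (b : ℂ) :
    (∀ (x t : ℝ) (i : Fin 1) (j : Fin 2),
      HasDerivAt (fun y => Bm k b y t i j) (Bx k b x t i j) x) ∧
    (∀ (x t : ℝ) (i j : Fin 1),
      HasDerivAt (fun y => Xm k b y t i j)
        ((Bm k b x t * sigma2 * (Bm k b x t)ᴴ) i j) x) ∧
    (∀ (x t : ℝ) (i : Fin 1) (j : Fin 2),
      HasDerivAt (fun s => Bm k b x s i j)
        ((Complex.I • (Am k * Bx k b x t)) i j) t) ∧
    (∀ x t : ℝ, Am k * Xm k b x t + Xm k b x t * (Am k)ᴴ +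
        Bm k b x t * sigma1 * (Bm k b x t)ᴴ = 0) := by
  refine ⟨hasDerivAt_Bm_x k b, hasDerivAt_Xm_x k b, hasDerivAt_Bm_t k b, fun x t => ?_⟩
  rw [Am_mul_add_mul_conjTranspose_Am, zero_add, Bm, real_row_mul_sigma1_mul_conjTranspose]

/-- The rational soliton data (A = ik, B, C = B*, X) forms a symmetric KdV prevessel. -/
theorem stmt_16 (k : ℝ) (hk : k ≠ 0) (b : ℂ) :
    (∀ (x t : ℝ) (i : Fin 1) (j : Fin 2),
      HasDerivAt (fun y => Bm k b y t i j) (Bx k b x t i j) x) ∧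
    (∀ (x t : ℝ) (i j : Fin 1),
      HasDerivAt (fun y => Xm k b y t i j)
        ((Bm k b x t * sigma2 * (Bm k b x t)ᴴ) i j) x) ∧
    (∀ (x t : ℝ) (i : Fin 1) (j : Fin 2),
      HasDerivAt (fun s => Bm k b x s i j)
        ((Complex.I • (Am k * Bx k b x t)) i j) t) ∧
    (∀ x t : ℝ, Am k * Xm k b x t + Xm k b x t * (Am k)ᴴ +
        Bm k b x t * sigma1 * (Bm k b x t)ᴴ = 0) :=
  stmt_16_general k b

end
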